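/- Assume the lens setting with M connected. Then for every index i and every successor C j of C i, there exist points p ∈ frontier (D i) and q ∈ frontier (D j) such that for every function π : M → ℝ that is constant-boundary for the lens, π(p) = π(q) = c_j(π), the common value of π on the frontier of C j. -/

import Mathlib

/-!
Let `C b` be a successor of `C a`. Since `C a` is connected and `C b ⊊ C a` is closed,
`C b` touches the closure of `C a \ C b`. By nestedness and the successor property, every
later piece meeting `C a \ C b` is either disjoint from `C b` or contained in it, so that
contact point lies in `D a`. Connectedness of `C b`, which meets `D a` but has interior points
outside it, then gives a point of `frontier (D a) ∩ frontier (C b)`.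

This yields `p` for the pair `(i, j)`. For `q`, take `x ∈ frontier (C j)`: either `x ∈ D j`,
and then `x ∈ frontier (D j)`, or `x` lies in some successor `C m` of `C j`, and then the same
argument for `(j, m)` yields `q ∈ frontier (D j) ∩ frontier (C m)` with `x ∈ frontier (C m)`.
A constant-boundary `π` takes one value on `frontier (C m)` and one on `frontier (C j)`.
-/

open Set

theorem IsPreconnected.inter_frontier_nonempty {X : Type*} [TopologicalSpace X] {s t : Set X}
    (hs : IsPreconnected s) (hst : (s ∩ t).Nonempty) (hsc : (s \ t).Nonempty) :
    (s ∩ frontier t).Nonempty := by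
  by_contra! h
  have hint : s ∩ closure t ⊆ interior t := fun x hx =>
    by_contra fun hxi => h.subset ⟨hx.1, hx.2, hxi⟩
  obtain ⟨x, hxs, hxt⟩ := hsc
  refine hxt (interior_subset (hs.subset_of_closure_inter_subset isOpen_interior ?_ ?_ hxs))
  · exact hst.mono fun y hy => ⟨hy.1, hint ⟨hy.1, subset_closure hy.2⟩⟩
  · exact fun y hy => hint ⟨hy.2, closure_mono interior_subset hy.1⟩

theorem mem_frontier_of_subset {X : Type*} [TopologicalSpace X] {s t : Set X} {x : X}
    (hts : t ⊆ s) (hx : x ∈ closure t) (hxs : x ∈ frontier s) : x ∈ frontier t :=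
  ⟨hx, fun h => hxs.2 (interior_mono hts h)⟩

section Lens

variable {α ι : Type*} [LinearOrder ι] {C : ι → Set α} {i j k : ι}

def IsNested (C : ι → Set α) : Prop :=
  ∀ i j, i < j → C j ⊂ C i ∨ C i ∩ C j = ∅

def IsSuccessor (C : ι → Set α) (i j : ι) : Prop :=
  C j ⊂ C i ∧ ¬ ∃ k, C j ⊂ C k ∧ C k ⊂ C i

theorem IsNested.ssubset_of_lt (hC : IsNested C) (hij : i < j) (h : (C i ∩ C j).Nonempty) :
    C j ⊂ C i :=
  (hC i j hij).resolve_right h.ne_empty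

theorem IsNested.lt_of_ssubset (hC : IsNested C) (h : C j ⊂ C i) (hj : (C j).Nonempty) :
    i < j := by
  rcases lt_trichotomy i j with hij | rfl | hji
  · exact hij
  · exact absurd h (ssubset_irrefl _)
  · rcases hC j i hji with h' | h'
    · exact absurd h' (ssubset_asymm h)
    · rw [inter_eq_left.2 h.1] at h'
      exact absurd h' hj.ne_empty

theorem IsNested.subset_of_isSuccessor (hC : IsNested C) (hs : IsSuccessor C i j) (hik : i < k)
    (hkj : (C k ∩ C j).Nonempty) : C k ⊆ C j := by
  rcases lt_trichotomy k j with hk | rfl | hk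
  · have hjk : C j ⊂ C k := hC.ssubset_of_lt hk hkj
    have hki : C k ⊂ C i := hC.ssubset_of_lt hik (hkj.mono fun x hx => ⟨hs.1.1 hx.2, hx.1⟩)
    exact absurd ⟨k, hjk, hki⟩ hs.2
  · exact subset_rfl
  · exact (hC.ssubset_of_lt hk (by rwa [inter_comm])).1

theorem IsNested.exists_isSuccessor_mem [Finite ι] (hC : IsNested C) {x : α} (hxj : x ∈ C j)
    (hjk : j < k) (hxk : x ∈ C k) : ∃ m, IsSuccessor C j m ∧ x ∈ C m := by
  obtain ⟨m, ⟨hjm, hxm⟩, hmax⟩ :=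
    (toFinite {k | j < k ∧ x ∈ C k}).exists_maximalFor C _ ⟨k, hjk, hxk⟩
  refine ⟨m, ⟨hC.ssubset_of_lt hjm ⟨x, hxj, hxm⟩, ?_⟩, hxm⟩
  rintro ⟨l, hml, hlj⟩
  have hjl : j < l := hC.lt_of_ssubset hlj ⟨x, hml.1 hxm⟩
  exact hml.2 (hmax ⟨hjl, hml.1 hxm⟩ hml.1)

variable [TopologicalSpace α]

/-- The support `D i` of the piece `C i`. -/
def lensSupport (C : ι → Set α) (i : ι) : Set α :=
  closure (C i \ ⋃ j > i, C j)

theorem lensSupport_subset (hi : IsClosed (C i)) : lensSupport C i ⊆ C i :=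
  closure_minimal sdiff_subset hi

theorem lensSupport_subset_compl_interior (hij : i < j) :
    lensSupport C i ⊆ (interior (C j))ᶜ := by
  rw [← closure_compl]
  exact closure_mono fun x hx hxj => hx.2 (mem_iUnion₂.2 ⟨j, hij, hxj⟩)

variable [Finite ι]

theorem IsNested.lensSupport_inter_nonempty (hC : IsNested C) (hclosed : ∀ i, IsClosed (C i))
    (hs : IsSuccessor C i j) (hi : IsPreconnected (C i)) (hj : (C j).Nonempty) :
    (C j ∩ lensSupport C i).Nonempty := by
  set S := {k | i < k ∧ C k ∩ C j = ∅}
  set F := lensSupport C i ∪ ⋃ k ∈ S, C k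
  have hF : IsClosed F :=
    isClosed_closure.union ((toFinite S).isClosed_biUnion fun k _ => hclosed k)
  have hcov : C i ⊆ C j ∪ F := by
    intro x hx
    by_cases hU : x ∈ ⋃ k > i, C k
    · obtain ⟨k, hik, hxk⟩ := mem_iUnion₂.1 hU
      by_cases hkj : C k ∩ C j = ∅
      · exact Or.inr (Or.inr (mem_biUnion ⟨hik, hkj⟩ hxk))
      · exact Or.inl (hC.subset_of_isSuccessor hs hik (nonempty_iff_ne_empty.2 hkj) hxk)
    · exact Or.inr (Or.inl (subset_closure ⟨hx, hU⟩))
  have hmeet : (C i ∩ (C j ∩ F)).Nonempty := by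
    by_contra! h
    rcases isPreconnected_iff_subset_of_disjoint_closed.1 hi _ _ (hclosed j) hF hcov h
      with hij | hiF
    · exact hs.1.2 hij
    · obtain ⟨y, hy⟩ := hj
      exact h.subset ⟨hs.1.1 hy, hy, hiF (hs.1.1 hy)⟩
  obtain ⟨y, -, hyj, hyD | hyS⟩ := hmeet
  · exact ⟨y, hyj, hyD⟩
  · obtain ⟨k, hk, hyk⟩ := mem_iUnion₂.1 hyS
    exact (hk.2.subset ⟨hyk, hyj⟩).elim

theorem IsNested.frontier_lensSupport_inter_frontier_nonempty (hC : IsNested C)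
    (hclosed : ∀ i, IsClosed (C i)) (hs : IsSuccessor C i j) (hi : IsPreconnected (C i))
    (hj : IsPreconnected (C j)) (hj' : (interior (C j)).Nonempty) :
    (frontier (lensSupport C i) ∩ frontier (C j)).Nonempty := by
  have hcompl := lensSupport_subset_compl_interior (C := C)
    (hC.lt_of_ssubset hs.1 (hj'.mono interior_subset))
  obtain ⟨y, hyj, hyD⟩ := hj.inter_frontier_nonempty
    (hC.lensSupport_inter_nonempty hclosed hs hi (hj'.mono interior_subset))
    (hj'.imp fun y hy => ⟨interior_subset hy, fun hyD => hcompl hyD hy⟩)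
  have hyD' : y ∈ lensSupport C i := isClosed_closure.frontier_subset hyD
  exact ⟨y, hyD, subset_closure hyj, hcompl hyD'⟩

theorem IsNested.exists_frontier_lensSupport_linked [PreconnectedSpace α] (hC : IsNested C)
    (hclosed : ∀ i, IsClosed (C i)) (hconn : ∀ i, IsPreconnected (C i))
    (hint : ∀ i, (interior (C i)).Nonempty) (hj : C j ≠ univ) :
    ∃ q ∈ frontier (lensSupport C j), ∃ x ∈ frontier (C j), ∃ m,
      q ∈ frontier (C m) ∧ x ∈ frontier (C m) := by
  obtain ⟨x, hx⟩ := nonempty_frontier_iff.2 ⟨(hint j).mono interior_subset, hj⟩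
  have hxj : x ∈ C j := (hclosed j).frontier_subset hx
  by_cases hxD : x ∈ lensSupport C j
  · have hxD' := mem_frontier_of_subset (lensSupport_subset (hclosed j)) (subset_closure hxD) hx
    exact ⟨x, hxD', x, hx, j, hx, hx⟩
  · obtain ⟨k, hjk, hxk⟩ : ∃ k > j, x ∈ C k := by
      by_contra! h
      exact hxD (subset_closure ⟨hxj, by simpa using h⟩)
    obtain ⟨m, hm, hxm⟩ := hC.exists_isSuccessor_mem hxj hjk hxk
    obtain ⟨q, hqD, hqm⟩ :=
      hC.frontier_lensSupport_inter_frontier_nonempty hclosed hm (hconn j) (hconn m) (hint m)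
    exact ⟨q, hqD, x, hx, m, hqm, mem_frontier_of_subset hm.1.1 (subset_closure hxm) hx⟩

end Lens

theorem link_lemma_general {M : Type*} [MetricSpace M] [ConnectedSpace M]
    {ι : Type*} [Fintype ι] [LinearOrder ι]
    (C : ι → Set M)
    (hclosed : ∀ i, IsClosed (C i))
    (hconn : ∀ i, IsConnected (C i))
    (hint : ∀ i, (interior (C i)).Nonempty)
    (hnest : ∀ i j, i < j → C j ⊂ C i ∨ C i ∩ C j = ∅)
    (D : ι → Set M)
    (hD : ∀ i, D i = closure (C i \ ⋃ j > i, C j)) :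
    ∀ i j : ι, i < j → C j ⊂ C i → (¬ ∃ k, C j ⊂ C k ∧ C k ⊂ C i) →
      ∃ p ∈ frontier (D i), ∃ q ∈ frontier (D j),
        ∀ π : M → ℝ, Continuous π →
          (∀ k, ∀ x ∈ frontier (C k), ∀ y ∈ frontier (C k), π x = π y) →
          π p = π q ∧ ∀ z ∈ frontier (C j), π p = π z := by
  intro i j _ hsub hsucc
  obtain rfl : D = lensSupport C := funext hD
  have hC : IsNested C := hnest
  have hpre i : IsPreconnected (C i) := (hconn i).isPreconnected
  obtain ⟨p, hpD, hpj⟩ := hC.frontier_lensSupport_inter_frontier_nonempty hclosed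
    ⟨hsub, hsucc⟩ (hpre i) (hpre j) (hint j)
  obtain ⟨q, hqD, x, hxj, m, hqm, hxm⟩ :=
    hC.exists_frontier_lensSupport_linked hclosed hpre hint (ne_top_of_lt hsub)
  refine ⟨p, hpD, q, hqD, fun π _ hπ => ⟨?_, fun z hz => hπ j p hpj z hz⟩⟩
  calc π p = π x := hπ j p hpj x hxj
    _ = π q := hπ m x hxm q hqm

/-- Link Lemma.  In the lens setting with `M` connected, for every index `i` and
every successor `C j` of `C i` (i.e. `i < j`, `C j ⊊ C i`, and no `C k` lies
strictly between), there are points `p ∈ frontier (D i)` and `q ∈ frontier (D j)`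
such that every continuous `π : M → ℝ` constant on each `frontier (C k)`
satisfies `π p = π q = c_j(π)`, the common value of `π` on `frontier (C j)`. -/
theorem link_lemma {M : Type*} [MetricSpace M] [CompactSpace M] [ConnectedSpace M]
    {ι : Type*} [Fintype ι] [LinearOrder ι]
    (C : ι → Set M)
    (hclosed : ∀ i, IsClosed (C i))
    (hconn : ∀ i, IsConnected (C i))
    (hint : ∀ i, (interior (C i)).Nonempty)
    (hnest : ∀ i j, i < j → C j ⊂ C i ∨ C i ∩ C j = ∅)
    (hcover : ⋃ i, C i = Set.univ)
    (D : ι → Set M)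
    (hD : ∀ i, D i = closure (C i \ ⋃ j > i, C j)) :
    ∀ i j : ι, i < j → C j ⊂ C i → (¬ ∃ k, C j ⊂ C k ∧ C k ⊂ C i) →
      ∃ p ∈ frontier (D i), ∃ q ∈ frontier (D j),
        ∀ π : M → ℝ, Continuous π →
          (∀ k, ∀ x ∈ frontier (C k), ∀ y ∈ frontier (C k), π x = π y) →
          π p = π q ∧ ∀ z ∈ frontier (C j), π p = π z :=
  link_lemma_general C hclosed hconn hint hnest D hD
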